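/- For a reduced knot diagram D with c crossings, the F₂ vector space of subsets of regions has dimension c+2, the effect map onto F₂^c is surjective, and hence its kernel has dimension exactly 2, consisting of {∅, B, W, B∪W} where B and W are the black and white region classes. -/

import Mathlib

/-!
STATEMENT 14: for a reduced knot diagram `D` with `c` crossings, the `F₂`
vector space of subsets of regions has dimension `c + 2` (as `D` has `c + 2`
regions), the effect map onto `F₂^c` is surjective, and its kernel has
dimension exactly 2, consisting of `{∅, B, W, B ∪ W}` (as indicator vectors),
where `B` and `W` are theblack and white region classes of a checkerboard
coloring.

A knot diagram is modelled faithfully by a rotation system.  A *dart* is a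
pair `(v, i)`: the `i`-th edge-end (in counterclockwise cyclic order) at the
crossing `v`.  The fixed-point-free involution `α` pairs the two ends of each
edge of the underlying 4-valent graph; `opp` sends a dart to the opposite dart
at the same crossing (continuing along the same strand).  The diagram is a
*knot* diagram when the relation generated by `α` and `opp` relates all darts
(the underlying curve has a single component), and it is *planar* (lies on
`S²`) when Euler's formula holds: the face permutation `α.trans rot` has
exactly `n + 2` orbits.  Regions are the orbits of the face permutation, and
`M R c` is the parity of the number of corners (darts) of the region `R` at
the crossing `c`.  Region crossing changes at a finite set `P` of regions add
`∑_{R ∈ P} M R ·` to the over/under vector in `F₂ = ZMod 2`.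
-/

open Equiv

abbrev Dart (n : ℕ) := Fin n × Fin 4

/-- the rotation of darts around a crossing -/
def rot (n : ℕ) : Equiv.Perm (Dart n) :=
  (Equiv.refl (Fin n)).prodCongr (Equiv.addRight (1 : Fin 4))

/-- the opposite dart at the same crossing (same strand) -/
def opp (n : ℕ) : Equiv.Perm (Dart n) :=
  (Equiv.refl (Fin n)).prodCongr (Equiv.addRight (2 : Fin 4))

/-- the setoid whose classes are the cycles (orbits) of a permutation -/
def cycleSetoid {β : Type*} (f : Equiv.Perm β) : Setoid β :=
  ⟨f.SameCycle, ⟨fun _ => Equiv.Perm.SameCycle.refl f _,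
    Equiv.Perm.SameCycle.symm, Equiv.Perm.SameCycle.trans⟩⟩

/-- a knot diagram with `n` crossings, encoded by a rotation system -/
structure KnotDiagram (n : ℕ) where
  pos : 0 < n
  /-- the fixed-point-free involution pairing the two ends of each edge -/
  α : Equiv.Perm (Dart n)
  invol : ∀ d, α (α d) = d
  no_fix : ∀ d, α d ≠ d
  /-- the underlying curve has a single component (it is a knot diagram) -/
  oneComponent : ∀ d d' : Dart n,
    Relation.EqvGen (fun x y => y = α x ∨ y = opp n x) d d'
  /-- planarity via Euler's formula: the face permutation has `n + 2` orbits -/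
  planar : Nat.card (Quotient (cycleSetoid (α.trans (rot n)))) = n + 2

/-- the regions (faces) of a knot diagram -/
def KnotDiagram.Region {n : ℕ} (D : KnotDiagram n) : Type :=
  Quotient (cycleSetoid (D.α.trans (rot n)))

/-- the region in whose boundary a given dart (corner) lies -/
def KnotDiagram.regionOf {n : ℕ} (D : KnotDiagram n) (d : Dart n) : D.Region :=
  Quotient.mk _ d

/-- the region-crossing incidence matrix over `F₂`: the parity of the number
of corners of region `R` at crossing `c` -/
noncomputable def KnotDiagram.M {n : ℕ} (D : KnotDiagram n) (R : D.Region) (c : Fin n) :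
    ZMod 2 :=
  (Nat.card {i : Fin 4 // D.regionOf (c, i) = R} : ZMod 2)

/-- the effect of region crossing changes at a set `P` of regions on the
crossing `c` -/
noncomputable def KnotDiagram.effect {n : ℕ} (D : KnotDiagram n) (P : Finset D.Region)
    (c : Fin n) : ZMod 2 :=
  ∑ R ∈ P, D.M R c

noncomputable instance {n : ℕ} (D : KnotDiagram n) : Fintype D.Region :=
  @Fintype.ofFinite _ (Quotient.finite _)

/-- `D` is reduced: at every crossing the two pairs of opposite corners lie in
distinct regions. -/
def KnotDiagram.Reduced {n : ℕ} (D : KnotDiagram n) : Prop :=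
  ∀ c : Fin n, D.regionOf (c, 0) ≠ D.regionOf (c, 2) ∧
    D.regionOf (c, 1) ≠ D.regionOf (c, 3)

/-- the effect map: it sends (the indicator vector of) a set of regions to
its total effect on the crossings, over `F₂` -/
noncomputable def KnotDiagram.effectMap {n : ℕ} (D : KnotDiagram n) :
    (D.Region → ZMod 2) →ₗ[ZMod 2] (Fin n → ZMod 2) :=
  Matrix.vecMulLinear (Matrix.of fun R c => D.M R c)

/-!
Over `F₂`, a function `v` on the regions lies in the kernel of the effect map iff at every
crossing the values of `v` on the four corners sum to zero. Call the jump of `v` at a dart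
`d` the sum of its values on the two regions on either side of the edge-end `d`. The two
ends of an edge see the same two regions, and for `v` in the kernel the jumps at opposite
darts of a crossing agree; since the diagram has one component, the jump of `v` is a
single constant `ε`. If `ε = 0`, `v` is constant; if `ε = 1`, so is `v + B`, because the
black indicator `B` jumps by `1` everywhere. Hence the kernel is `{0, B, B + 1, 1}` with
`B + 1 = W`, it has dimension `2`, and by rank-nullity and Euler's formula
(`c + 2` regions) the effect map is onto.
-/

theorem eq_zero_or_eq_one_of_forall_eq {ι : Type*} (w : ι → ZMod 2)
    (hw : ∀ i j, w i = w j) : w = 0 ∨ w = 1 := by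
  rcases isEmpty_or_nonempty ι with _ | ⟨⟨i₀⟩⟩
  · exact Or.inl (Subsingleton.elim _ _)
  · obtain h | h : w i₀ = 0 ∨ w i₀ = 1 := by generalize w i₀ = a; revert a; decide
    · exact Or.inl (funext fun i => (hw i i₀).trans h)
    · exact Or.inr (funext fun i => (hw i i₀).trans h)

lemma opp_eq_rot_rot {n : ℕ} (d : Dart n) : opp n d = rot n (rot n d) := by
  obtain ⟨c, i⟩ := d
  simp only [opp, rot, Equiv.prodCongr_apply, Equiv.coe_refl, Prod.map_apply, id,
    Equiv.coe_addRight, add_assoc]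
  rfl

namespace KnotDiagram

variable {n : ℕ} (D : KnotDiagram n)

lemma regionOf_rot_α (d : Dart n) : D.regionOf (rot n (D.α d)) = D.regionOf d :=
  Quotient.sound ⟨-1, by rw [zpow_neg_one]; exact (D.α.trans (rot n)).symm_apply_apply d⟩

lemma regionOf_α (d : Dart n) : D.regionOf (D.α d) = D.regionOf (rot n d) := by
  simpa only [D.invol] using (D.regionOf_rot_α (D.α d)).symm

lemma eq_of_forall_α_opp {β : Type*} (f : Dart n → β) (hα : ∀ d, f (D.α d) = f d)
    (hopp : ∀ d, f (opp n d) = f d) (x y : Dart n) : f x = f y := by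
  induction D.oneComponent x y with
  | rel a b hab => rcases hab with rfl | rfl <;> simp only [hα, hopp]
  | refl => rfl
  | symm _ _ _ ih => exact ih.symm
  | trans _ _ _ _ _ ih₁ ih₂ => exact ih₁.trans ih₂

lemma eq_of_forall_regionOf_rot {β : Type*} (w : D.Region → β)
    (hw : ∀ d, w (D.regionOf (rot n d)) = w (D.regionOf d)) (R R' : D.Region) : w R = w R' := by
  induction R, R' using Quotient.inductionOn₂ with
  | h x y =>
    refine D.eq_of_forall_α_opp (w ∘ D.regionOf) (fun d => ?_) (fun d => ?_) x y
    · simp only [Function.comp_apply, regionOf_α, hw]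
    · simp only [Function.comp_apply, opp_eq_rot_rot, hw]

lemma effectMap_apply (v : D.Region → ZMod 2) (c : Fin n) :
    D.effectMap v c = ∑ i : Fin 4, v (D.regionOf (c, i)) := by
  classical
  simp only [effectMap, Matrix.vecMulLinear_apply, Matrix.vecMul, dotProduct, Matrix.of_apply, M,
    Nat.card_eq_fintype_card, Fintype.card_subtype]
  rw [← Finset.sum_fiberwise Finset.univ (fun i => D.regionOf (c, i))]
  refine Finset.sum_congr rfl fun R _ => ?_
  rw [Finset.sum_congr rfl fun i hi => congrArg v (Finset.mem_filter.mp hi).2, Finset.sum_const,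
    nsmul_eq_mul, mul_comm]

lemma mem_ker_effectMap_iff (v : D.Region → ZMod 2) :
    v ∈ LinearMap.ker D.effectMap ↔ ∀ c : Fin n, ∑ i : Fin 4, v (D.regionOf (c, i)) = 0 := by
  simp only [LinearMap.mem_ker, funext_iff, effectMap_apply, Pi.zero_apply]

lemma one_mem_ker_effectMap : (1 : D.Region → ZMod 2) ∈ LinearMap.ker D.effectMap := by
  refine (D.mem_ker_effectMap_iff 1).2 fun c => ?_
  simp only [Pi.one_apply, Finset.sum_const, Finset.card_univ, Fintype.card_fin]
  decide

lemma finrank_region_fun : Module.finrank (ZMod 2) (D.Region → ZMod 2) = n + 2 := by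
  rw [Module.finrank_pi, ← Nat.card_eq_fintype_card]
  exact D.planar

def jump (v : D.Region → ZMod 2) (d : Dart n) : ZMod 2 :=
  v (D.regionOf (rot n d)) + v (D.regionOf d)

lemma jump_add (v w : D.Region → ZMod 2) (d : Dart n) :
    D.jump (v + w) d = D.jump v d + D.jump w d := by
  simp only [jump, Pi.add_apply]
  ring

lemma jump_α (v : D.Region → ZMod 2) (d : Dart n) : D.jump v (D.α d) = D.jump v d := by
  simp only [jump, regionOf_α, regionOf_rot_α, add_comm]

lemma jump_opp_of_mem_ker {v : D.Region → ZMod 2} (hv : v ∈ LinearMap.ker D.effectMap)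
    (d : Dart n) : D.jump v (opp n d) = D.jump v d := by
  obtain ⟨c, i⟩ := d
  have h := (D.mem_ker_effectMap_iff v).1 hv c
  rw [Fin.sum_univ_four] at h
  fin_cases i <;>
    simp only [jump, rot, opp, prodCongr_apply, coe_refl, coe_addRight, Prod.map_apply, id_eq,
      Fin.isValue, Fin.zero_eta, Fin.mk_one, Fin.reduceFinMk, Fin.reduceAdd, zero_add] <;>
    grind

lemma jump_eq_of_mem_ker {v : D.Region → ZMod 2} (hv : v ∈ LinearMap.ker D.effectMap)
    (d d' : Dart n) : D.jump v d = D.jump v d' :=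
  D.eq_of_forall_α_opp (D.jump v) (D.jump_α v) (D.jump_opp_of_mem_ker hv) d d'

lemma eq_zero_or_eq_one_of_jump_eq_zero {w : D.Region → ZMod 2} (hw : ∀ d, D.jump w d = 0) :
    w = 0 ∨ w = 1 :=
  eq_zero_or_eq_one_of_forall_eq w
    (D.eq_of_forall_regionOf_rot w fun d => CharTwo.add_eq_zero.1 (hw d))

def IsCheckerboard (u : D.Region → ZMod 2) : Prop :=
  ∀ d, D.jump u d = 1

variable {D}

lemma isCheckerboard_of_coloring {col : D.Region → Bool}
    (hcol : ∀ d : Dart n, col (D.regionOf d) ≠ col (D.regionOf (rot n d))) :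
    D.IsCheckerboard fun R => if col R = true then 1 else 0 := fun d => by
  have := hcol d
  revert this
  simp only [jump]
  generalize col (D.regionOf d) = a, col (D.regionOf (rot n d)) = b
  revert a b
  decide

lemma IsCheckerboard.add_one {u : D.Region → ZMod 2} (hu : D.IsCheckerboard u) :
    D.IsCheckerboard (u + 1) := fun d => by
  rw [jump_add, hu d]
  simp only [jump, Pi.one_apply, CharTwo.add_self_eq_zero, add_zero]

lemma IsCheckerboard.mem_ker {u : D.Region → ZMod 2} (hu : D.IsCheckerboard u) :
    u ∈ LinearMap.ker D.effectMap := by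
  refine (D.mem_ker_effectMap_iff u).2 fun c => ?_
  have h₀ : u (D.regionOf (c, 1)) + u (D.regionOf (c, 0)) = 1 := hu (c, 0)
  have h₂ : u (D.regionOf (c, 3)) + u (D.regionOf (c, 2)) = 1 := hu (c, 2)
  rw [Fin.sum_univ_four]
  grind

lemma IsCheckerboard.coe_ker_effectMap {u : D.Region → ZMod 2} (hu : D.IsCheckerboard u) :
    (LinearMap.ker D.effectMap : Set (D.Region → ZMod 2)) = {0, u, u + 1, 1} := by
  ext v
  simp only [SetLike.mem_coe, Set.mem_insert_iff, Set.mem_singleton_iff]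
  constructor
  · intro hv
    obtain ⟨ε, hε⟩ : ∃ ε, ∀ d, D.jump v d = ε :=
      ⟨_, fun d => jump_eq_of_mem_ker D hv d (⟨0, D.pos⟩, 0)⟩
    obtain rfl | rfl : ε = 0 ∨ ε = 1 := by generalize ε = a; revert a; decide
    · rcases D.eq_zero_or_eq_one_of_jump_eq_zero hε with rfl | rfl <;> simp
    · have hvu (d : Dart n) : D.jump (v + u) d = 0 := by
        rw [jump_add, hε d, hu d, CharTwo.add_self_eq_zero]
      rcases D.eq_zero_or_eq_one_of_jump_eq_zero hvu with h | h
      · exact Or.inr (Or.inl (funext fun R => CharTwo.add_eq_zero.1 (congrFun h R)))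
      · refine Or.inr (Or.inr (Or.inl (funext fun R => ?_)))
        exact (CharTwo.add_eq_iff_eq_add.1 (congrFun h R)).trans (add_comm _ _)
  · rintro (rfl | rfl | rfl | rfl)
    · exact zero_mem _
    · exact hu.mem_ker
    · exact hu.add_one.mem_ker
    · exact D.one_mem_ker_effectMap

lemma IsCheckerboard.linearIndependent {u : D.Region → ZMod 2} (hu : D.IsCheckerboard u) :
    LinearIndependent (ZMod 2) ![u, 1] := by
  refine LinearIndependent.pair_iff.2 fun s t hst => ?_
  let d₀ : Dart n := (⟨0, D.pos⟩, 0)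
  have h₀ := congrFun hst (D.regionOf d₀)
  have h₁ := congrFun hst (D.regionOf (rot n d₀))
  have hu₀ : u (D.regionOf (rot n d₀)) + u (D.regionOf d₀) = 1 := hu d₀
  simp only [Pi.add_apply, Pi.smul_apply, Pi.one_apply, Pi.zero_apply, smul_eq_mul,
    mul_one] at h₀ h₁
  grind

lemma IsCheckerboard.ker_effectMap_eq_span {u : D.Region → ZMod 2} (hu : D.IsCheckerboard u) :
    LinearMap.ker D.effectMap = Submodule.span (ZMod 2) (Set.range ![u, 1]) := by
  refine le_antisymm (fun v hv => ?_) (Submodule.span_le.2 ?_)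
  · have hmem (i : Fin 2) : ![u, 1] i ∈ Submodule.span (ZMod 2) (Set.range ![u, 1]) :=
      Submodule.subset_span (Set.mem_range_self i)
    rw [← SetLike.mem_coe, hu.coe_ker_effectMap] at hv
    rcases hv with rfl | rfl | rfl | rfl
    · exact zero_mem _
    · exact hmem 0
    · exact add_mem (hmem 0) (hmem 1)
    · exact hmem 1
  · rintro _ ⟨i, rfl⟩
    fin_cases i
    · exact hu.mem_ker
    · exact D.one_mem_ker_effectMap

lemma IsCheckerboard.finrank_ker_effectMap {u : D.Region → ZMod 2} (hu : D.IsCheckerboard u) :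
    Module.finrank (ZMod 2) (LinearMap.ker D.effectMap) = 2 := by
  rw [hu.ker_effectMap_eq_span, finrank_span_eq_card hu.linearIndependent, Fintype.card_fin]

lemma IsCheckerboard.effectMap_surjective {u : D.Region → ZMod 2} (hu : D.IsCheckerboard u) :
    Function.Surjective D.effectMap := by
  rw [← LinearMap.range_eq_top]
  refine Submodule.eq_top_of_finrank_eq ?_
  have := LinearMap.finrank_range_add_finrank_ker D.effectMap
  rw [hu.finrank_ker_effectMap, D.finrank_region_fun] at this
  rw [Module.finrank_fin_fun]
  omega

end KnotDiagram

theorem effect_map_dimensions_general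
    {n : ℕ} (D : KnotDiagram n)
    (col : D.Region → Bool)
    (hcol : ∀ d : Dart n, col (D.regionOf d) ≠ col (D.regionOf (rot n d)))
    (indB indW : D.Region → ZMod 2)
    (hindB : indB = fun R => if col R = true then 1 else 0)
    (hindW : indW = fun R => if col R = false then 1 else 0) :
    Module.finrank (ZMod 2) (D.Region → ZMod 2) = n + 2 ∧
      Function.Surjective D.effectMap ∧
      Module.finrank (ZMod 2) ↥(LinearMap.ker D.effectMap) = 2 ∧
      (LinearMap.ker D.effectMap : Set (D.Region → ZMod 2))
        = {0, indB, indW, indB + indW} := by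
  have hB : D.IsCheckerboard indB := hindB ▸ KnotDiagram.isCheckerboard_of_coloring hcol
  have hW : indW = indB + 1 := by
    subst hindB hindW
    funext R
    simp only [Pi.add_apply, Pi.one_apply]
    cases col R <;> decide
  have hBW : indB + indW = 1 := hW ▸ funext fun R => CharTwo.add_cancel_left (indB R) 1
  refine ⟨D.finrank_region_fun, hB.effectMap_surjective, hB.finrank_ker_effectMap, ?_⟩
  rw [hB.coe_ker_effectMap, hBW, hW]

theorem effect_map_dimensions
    {n : ℕ} (D : KnotDiagram n) (hred : D.Reduced)
    (col : D.Region → Bool)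
    (hcol : ∀ d : Dart n, col (D.regionOf d) ≠ col (D.regionOf (rot n d)))
    (indB indW : D.Region → ZMod 2)
    (hindB : indB = fun R => if col R = true then 1 else 0)
    (hindW : indW = fun R => if col R = false then 1 else 0) :
    Module.finrank (ZMod 2) (D.Region → ZMod 2) = n + 2 ∧
      Function.Surjective D.effectMap ∧
      Module.finrank (ZMod 2) ↥(LinearMap.ker D.effectMap) = 2 ∧
      (LinearMap.ker D.effectMap : Set (D.Region → ZMod 2))
        = {0, indB, indW, indB + indW} :=
  effect_map_dimensions_general D col hcol indB indW hindB hindW
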